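/- arXiv:1705.08140 — 5 statements merged into one kernel-verified Lean document; each statement's English description precedes it below -/
import Mathlib

section
/- Let n ≥ 1 and b^1,...,b^n ∈ ℝ. Say that an integer interval I = {k_0, k_0+1, ..., k_1} ⊆ {1,...,n} is locally stable if either it is a singleton or for every m with k_0 ≤ m < k_1 one has (1/(m−k_0+1))·∑_{k=k_0}^m b^k > (1/(k_1−m))·∑_{k=m+1}^{k_1} b^k. If I and J are two locally stable integer intervals in {1,...,n} with I ∩ J nonempty, then I ∪ J is a locally stable integer interval. -/
open Finset

/-- An integer interval `{k₀, …, k₁} ⊆ {1, …, n}` is locally stable if it is a singleton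
or every left/right split has the left average drift strictly larger. -/
def LocallyStable (b : ℕ → ℝ) (k0 k1 : ℕ) : Prop :=
  k0 = k1 ∨ ∀ m, k0 ≤ m → m < k1 →
    (1 / ((m : ℝ) - k0 + 1)) * ∑ k ∈ Icc k0 m, b k >
      (1 / ((k1 : ℝ) - m)) * ∑ k ∈ Icc (m + 1) k1, b k

/-- Average of `b` over the integer interval `[p, q]`. -/
noncomputable def lsA (b : ℕ → ℝ) (p q : ℕ) : ℝ := (∑ k ∈ Icc p q, b k) / ((q : ℝ) - p + 1)

lemma lsW_pos {p q : ℕ} (h : p ≤ q) : (0:ℝ) < (q:ℝ) - p + 1 := by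
  have : (p:ℝ) ≤ q := Nat.cast_le.2 h
  linarith

lemma ls_sum_split (b : ℕ → ℝ) {a m c : ℕ} (h1 : a ≤ m + 1) (h2 : m ≤ c) :
    ∑ k ∈ Icc a m, b k + ∑ k ∈ Icc (m+1) c, b k = ∑ k ∈ Icc a c, b k := by
  rw [← Finset.Ico_add_one_right_eq_Icc, ← Finset.Ico_add_one_right_eq_Icc, ← Finset.Ico_add_one_right_eq_Icc]
  exact sum_Ico_consecutive b h1 (Nat.succ_le_succ h2)

lemma ls_split (b : ℕ → ℝ) {a m c : ℕ} (h1 : a ≤ m) (h2 : m < c) :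
    ∃ w1 w2 : ℝ, 0 < w1 ∧ 0 < w2 ∧
      (w1 + w2) * lsA b a c = w1 * lsA b a m + w2 * lsA b (m+1) c := by
  refine ⟨(m:ℝ) - a + 1, (c:ℝ) - (↑(m+1)) + 1, lsW_pos h1, lsW_pos h2, ?_⟩
  have hw1 : ((m:ℝ) - a + 1) ≠ 0 := (lsW_pos h1).ne'
  have hw2 : ((c:ℝ) - (↑(m+1)) + 1) ≠ 0 := (lsW_pos h2).ne'
  have hw3 : ((c:ℝ) - a + 1) ≠ 0 := (lsW_pos (h1.trans h2.le)).ne'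
  have hsum : ((m:ℝ) - a + 1) + ((c:ℝ) - (↑(m+1)) + 1) = (c:ℝ) - a + 1 := by
    push_cast; ring
  have hS := ls_sum_split b (Nat.le_succ_of_le h1) h2.le
  have hmul : ∀ (s w : ℝ), w ≠ 0 → w * (s / w) = s := by
    intro s w hw; field_simp
  unfold lsA
  rw [hsum, hmul _ _ hw3, hmul _ _ hw1, hmul _ _ hw2]
  exact hS.symm

lemma wa_xz {w1 w2 x y z : ℝ} (h1 : 0 < w1) (h2 : 0 < w2)
    (hz : (w1+w2)*z = w1*x + w2*y) (hxy : x > y) : x > z := by nlinarith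

lemma wa_zy {w1 w2 x y z : ℝ} (h1 : 0 < w1) (h2 : 0 < w2)
    (hz : (w1+w2)*z = w1*x + w2*y) (hxy : x > y) : z > y := by nlinarith

lemma wa_lt {w1 w2 x y z t : ℝ} (h1 : 0 < w1) (h2 : 0 < w2)
    (hz : (w1+w2)*z = w1*x + w2*y) (hx : x < t) (hy : y < t) : z < t := by nlinarith

lemma wa_gt {w1 w2 x y z t : ℝ} (h1 : 0 < w1) (h2 : 0 < w2)
    (hz : (w1+w2)*z = w1*x + w2*y) (hx : x > t) (hy : y > t) : z > t := by nlinarith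

lemma ls_iff (b : ℕ → ℝ) (k0 k1 : ℕ) :
    LocallyStable b k0 k1 ↔
      (k0 = k1 ∨ ∀ m, k0 ≤ m → m < k1 → lsA b k0 m > lsA b (m+1) k1) := by
  unfold LocallyStable
  refine or_congr Iff.rfl (forall_congr' fun m => imp_congr Iff.rfl (imp_congr Iff.rfl ?_))
  have e1 : (1:ℝ)/((m:ℝ)-k0+1) * ∑ k ∈ Icc k0 m, b k = lsA b k0 m := by
    rw [one_div_mul_eq_div]; rfl
  have e2 : (1:ℝ)/((k1:ℝ)-m) * ∑ k ∈ Icc (m+1) k1, b k = lsA b (m+1) k1 := by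
    rw [one_div_mul_eq_div]; unfold lsA; congr 1; push_cast; ring
  rw [e1, e2]

lemma ls_key (b : ℕ → ℝ) (i0 i1 j0 j1 : ℕ)
    (hle : i0 ≤ j0) (hi' : i0 ≤ i1) (hj' : j0 ≤ j1)
    (hI : LocallyStable b i0 i1) (hJ : LocallyStable b j0 j1)
    (hov : j0 ≤ i1) : LocallyStable b i0 (max i1 j1) := by
  rcases le_or_gt j1 i1 with h | h
  · rwa [max_eq_left h]
  rw [max_eq_right h.le]
  rcases eq_or_lt_of_le hi' with he | hi0i1
  · have hji : j0 = i0 := le_antisymm (he ▸ hov) hle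
    rwa [hji] at hJ
  rw [ls_iff] at hI hJ ⊢
  have HI := hI.resolve_left (by omega)
  have HJ := hJ.resolve_left (by omega)
  refine Or.inr ?_
  have F1 : ∀ m, j0 ≤ m → m < j1 → lsA b (m+1) j1 < lsA b j0 j1 := by
    intro m h0 h1
    obtain ⟨w1, w2, p1, p2, hz⟩ := ls_split b h0 h1
    exact wa_zy p1 p2 hz (HJ m h0 h1)
  have F2 : ∀ m, j0 ≤ m → m < j1 → lsA b j0 m > lsA b j0 j1 := by
    intro m h0 h1
    obtain ⟨w1, w2, p1, p2, hz⟩ := ls_split b h0 h1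
    exact wa_xz p1 p2 hz (HJ m h0 h1)
  have F3 : lsA b i0 i1 > lsA b j0 j1 := by
    rcases eq_or_lt_of_le hle with he | hlt
    · rw [he]
      exact F2 i1 hov h
    · have hm0' : i0 ≤ j0 - 1 := by omega
      have hm1' : j0 - 1 < i1 := by omega
      have hsucc : j0 - 1 + 1 = j0 := by omega
      have hIm := HI (j0-1) hm0' hm1'
      rw [hsucc] at hIm
      obtain ⟨w1, w2, p1, p2, hz⟩ := ls_split b hm0' hm1'
      rw [hsucc] at hz
      have h1 : lsA b i0 i1 > lsA b j0 i1 := wa_zy p1 p2 hz hIm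
      have h2 : lsA b j0 i1 > lsA b j0 j1 := F2 i1 hov h
      linarith
  intro m hm0 hm1
  rcases lt_or_ge m i1 with hmi | hmi
  · have hxz : lsA b i0 m > lsA b i0 i1 := by
      obtain ⟨w1, w2, p1, p2, hz⟩ := ls_split b hm0 hmi
      exact wa_xz p1 p2 hz (HI m hm0 hmi)
    have hzy : lsA b i0 i1 > lsA b (m+1) i1 := by
      obtain ⟨w1, w2, p1, p2, hz⟩ := ls_split b hm0 hmi
      exact wa_zy p1 p2 hz (HI m hm0 hmi)
    have htail : lsA b (i1+1) j1 < lsA b j0 j1 := F1 i1 hov h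
    obtain ⟨w1, w2, p1, p2, hz⟩ := ls_split b (show m+1 ≤ i1 from hmi) h
    have : lsA b (m+1) j1 < lsA b i0 i1 := wa_lt p1 p2 hz hzy (by linarith)
    linarith
  · have hj0m : j0 ≤ m := le_trans hov hmi
    have hr : lsA b (m+1) j1 < lsA b j0 j1 := F1 m hj0m hm1
    have hl : lsA b i0 m > lsA b j0 j1 := by
      rcases eq_or_lt_of_le hle with he | hlt
      · rw [he]; exact F2 m hj0m hm1
      · have hm0' : i0 ≤ j0 - 1 := by omega
        have hsucc : j0 - 1 + 1 = j0 := by omega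
        have hIm := HI (j0-1) hm0' (by omega)
        rw [hsucc] at hIm
        obtain ⟨w1, w2, p1, p2, hz⟩ := ls_split b hm0' (show j0 - 1 < i1 by omega)
        rw [hsucc] at hz
        have hA1 : lsA b i0 (j0-1) > lsA b i0 i1 := wa_xz p1 p2 hz hIm
        have hA2 : lsA b j0 m > lsA b j0 j1 := F2 m hj0m hm1
        obtain ⟨w1', w2', p1', p2', hz'⟩ := ls_split b hm0' (show j0 - 1 < m by omega)
        rw [hsucc] at hz'
        exact wa_gt p1' p2' hz' (by linarith) hA2
    linarith

/-- The union of two overlapping locally stable intervals is locally stable. -/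
theorem locallyStable_union (n : ℕ) (b : ℕ → ℝ) (i0 i1 j0 j1 : ℕ)
    (hi : 1 ≤ i0) (hi' : i0 ≤ i1) (hi'' : i1 ≤ n)
    (hj : 1 ≤ j0) (hj' : j0 ≤ j1) (hj'' : j1 ≤ n)
    (hI : LocallyStable b i0 i1) (hJ : LocallyStable b j0 j1)
    (hover : max i0 j0 ≤ min i1 j1) :
    LocallyStable b (min i0 j0) (max i1 j1) := by
  have h1 : j0 ≤ i1 := le_trans (le_max_right i0 j0) (hover.trans (min_le_left _ _))
  have h2 : i0 ≤ j1 := le_trans (le_max_left i0 j0) (hover.trans (min_le_right _ _))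
  rcases le_total i0 j0 with h | h
  · rw [min_eq_left h]
    exact ls_key b i0 i1 j0 j1 h hi' hj' hI hJ h1
  · rw [min_eq_right h, max_comm]
    exact ls_key b j0 j1 i0 i1 h hj' hi' hJ hI h2
end

section
/- Let n ≥ 1 and b^1,...,b^n ∈ ℝ, and suppose {1,...,n} is partitioned into consecutive integer intervals C_1, ..., C_D (listed from left to right), each of which is a maximal locally stable interval (a cluster). Define the average drift of cluster C_d as b̄^d = (1/|C_d|)·∑_{k ∈ C_d} b^k. Then b̄^1 ≤ b̄^2 ≤ ... ≤ b̄^D. -/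
open Finset

/-- Average of `b` over `{j+1, …, k}`. -/
noncomputable def avg (b : ℕ → ℝ) (j k : ℕ) : ℝ :=
  (∑ i ∈ Icc (j + 1) k, b i) / ((k : ℝ) - j)

lemma avg_key (b : ℕ → ℝ) {j m k : ℕ} (hjm : j < m) (hmk : m < k) :
    ((k : ℝ) - j) * avg b j k = ((m : ℝ) - j) * avg b j m + ((k : ℝ) - m) * avg b m k := by
  have h1 : ((m : ℝ) - j) ≠ 0 := by
    have : (j : ℝ) < m := by exact_mod_cast hjm
    linarith
  have h2 : ((k : ℝ) - m) ≠ 0 := by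
    have : (m : ℝ) < k := by exact_mod_cast hmk
    linarith
  have h3 : ((k : ℝ) - j) ≠ 0 := by
    have : (j : ℝ) < k := by exact_mod_cast hjm.trans hmk
    linarith
  have hsum : ∑ i ∈ Icc (j + 1) m, b i + ∑ i ∈ Icc (m + 1) k, b i
      = ∑ i ∈ Icc (j + 1) k, b i := by
    rw [Finset.Icc_add_one_left_eq_Ioc, Finset.Icc_add_one_left_eq_Ioc, Finset.Icc_add_one_left_eq_Ioc]
    exact Finset.sum_Ioc_consecutive b hjm.le hmk.le
  unfold avg
  rw [mul_div_cancel₀ _ h3, mul_div_cancel₀ _ h1, mul_div_cancel₀ _ h2, hsum]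

lemma avg_pos_facts {j m k : ℕ} (hjm : j < m) (hmk : m < k) :
    (0 : ℝ) < (m : ℝ) - j ∧ (0 : ℝ) < (k : ℝ) - m ∧ (0 : ℝ) < (k : ℝ) - j := by
  refine ⟨?_, ?_, ?_⟩
  · have : (j : ℝ) < m := by exact_mod_cast hjm
    linarith
  · have : (m : ℝ) < k := by exact_mod_cast hmk
    linarith
  · have : (j : ℝ) < k := by exact_mod_cast hjm.trans hmk
    linarith

lemma avg_gt_combine (b : ℕ → ℝ) {j m k : ℕ} {x : ℝ} (hjm : j < m) (hmk : m < k)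
    (h1 : avg b j m > x) (h2 : avg b m k > x) : avg b j k > x := by
  obtain ⟨p1, p2, p3⟩ := avg_pos_facts hjm hmk
  have key := avg_key b hjm hmk
  nlinarith [mul_lt_mul_of_pos_left h1 p1, mul_lt_mul_of_pos_left h2 p2]

lemma avg_lt_combine (b : ℕ → ℝ) {j m k : ℕ} {x : ℝ} (hjm : j < m) (hmk : m < k)
    (h1 : avg b j m < x) (h2 : avg b m k < x) : avg b j k < x := by
  obtain ⟨p1, p2, p3⟩ := avg_pos_facts hjm hmk
  have key := avg_key b hjm hmk
  nlinarith [mul_lt_mul_of_pos_left h1 p1, mul_lt_mul_of_pos_left h2 p2]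

lemma avg_left_gt (b : ℕ → ℝ) {j m k : ℕ} (hjm : j < m) (hmk : m < k)
    (h : avg b j m > avg b m k) : avg b j m > avg b j k := by
  obtain ⟨p1, p2, p3⟩ := avg_pos_facts hjm hmk
  have key := avg_key b hjm hmk
  nlinarith [mul_lt_mul_of_pos_left h p2]

lemma avg_gt_right (b : ℕ → ℝ) {j m k : ℕ} (hjm : j < m) (hmk : m < k)
    (h : avg b j m > avg b m k) : avg b j k > avg b m k := by
  obtain ⟨p1, p2, p3⟩ := avg_pos_facts hjm hmk
  have key := avg_key b hjm hmk
  nlinarith [mul_lt_mul_of_pos_left h p1]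

/-- Conversion from `LocallyStable` to the `avg` form. -/
lemma LS_to (b : ℕ → ℝ) (j k : ℕ) (h : LocallyStable b (j + 1) k) :
    ∀ m, j < m → m < k → avg b j m > avg b m k := by
  intro m hjm hmk
  rcases h with h | h
  · omega
  · have H := h m (by omega) hmk
    have h1 : ((m : ℝ) - ↑(j + 1) + 1) = (m : ℝ) - j := by push_cast; ring
    rw [h1, one_div_mul_eq_div, one_div_mul_eq_div] at H
    exact H

/-- Conversion from the `avg` form to `LocallyStable`. -/
lemma LS_of (b : ℕ → ℝ) (j k : ℕ)
    (h : ∀ m, j < m → m < k → avg b j m > avg b m k) : LocallyStable b (j + 1) k := by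
  right
  intro m h1 h2
  have H := h m (by omega) h2
  have e1 : ((m : ℝ) - ↑(j + 1) + 1) = (m : ℝ) - j := by push_cast; ring
  rw [e1, one_div_mul_eq_div, one_div_mul_eq_div]
  exact H

/-- Merging two locally stable intervals when the left average exceeds the right. -/
lemma avg_merge (b : ℕ → ℝ) {j p c : ℕ} (hjp : j < p) (hpc : p < c)
    (hA : ∀ m, j < m → m < p → avg b j m > avg b m p)
    (hB : ∀ m, p < m → m < c → avg b p m > avg b m c)
    (hx : avg b j p > avg b p c) :
    ∀ m, j < m → m < c → avg b j m > avg b m c := by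
  intro m hjm hmc
  rcases lt_trichotomy m p with h | h | h
  · have h1 : avg b j m > avg b m p := hA m hjm h
    have h2 : avg b j m > avg b j p := avg_left_gt b hjm h h1
    have h3 : avg b j m > avg b p c := lt_trans hx h2
    exact avg_lt_combine b h hpc h1 h3
  · subst h; exact hx
  · have h1 : avg b p m > avg b m c := hB m h hmc
    have h2 : avg b p c > avg b m c := avg_gt_right b h hmc h1
    have h3 : avg b j p > avg b m c := lt_trans h2 hx
    exact avg_gt_combine b hjp h h3 h1

/-- If `{1, …, n}` is partitioned into consecutive maximal locally stable intervals
(clusters) `C_d = {e (d-1) + 1, …, e d}`, then the average drifts of the clusters,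
from left to right, are nondecreasing. -/
theorem cluster_average_drifts_monotone (n D : ℕ) (hn : 1 ≤ n) (hD : 1 ≤ D)
    (b : ℕ → ℝ) (e : ℕ → ℕ)
    (he0 : e 0 = 0) (heD : e D = n)
    (hmono : ∀ d, d < D → e d < e (d + 1))
    (hstable : ∀ d, 1 ≤ d → d ≤ D → LocallyStable b (e (d - 1) + 1) (e d))
    (hmax : ∀ d, 1 ≤ d → d ≤ D → ∀ k0 k1, 1 ≤ k0 → k1 ≤ n →
      k0 ≤ e (d - 1) + 1 → e d ≤ k1 → LocallyStable b k0 k1 →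
      k0 = e (d - 1) + 1 ∧ k1 = e d) :
    ∀ d, 1 ≤ d → d < D →
      (1 / ((e d : ℝ) - e (d - 1))) * ∑ k ∈ Icc (e (d - 1) + 1) (e d), b k ≤
        (1 / ((e (d + 1) : ℝ) - e d)) * ∑ k ∈ Icc (e d + 1) (e (d + 1)), b k := by
  have emono : ∀ c, c ≤ D → ∀ a, a ≤ c → e a ≤ e c := by
    intro c
    induction c with
    | zero =>
      intro _ a ha
      obtain rfl : a = 0 := by omega
      exact le_rfl
    | succ c ih =>
      intro hc a ha
      rcases Nat.lt_succ_iff_lt_or_eq.mp (Nat.lt_succ_of_le ha) with h | h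
      · exact (ih (by omega) a (by omega)).trans (hmono c (by omega)).le
      · exact h ▸ le_rfl
  intro d hd hdD
  by_contra hcon
  push_neg at hcon
  set j := e (d - 1) with hj
  set p := e d with hp
  set c := e (d + 1) with hc
  have hjp : j < p := by
    have := hmono (d - 1) (by omega)
    have hdd : d - 1 + 1 = d := by omega
    rw [hdd] at this
    exact this
  have hpc : p < c := hmono d hdD
  have hx : avg b j p > avg b p c := by
    rw [one_div_mul_eq_div, one_div_mul_eq_div] at hcon
    exact hcon
  have hA := LS_to b j p (hstable d hd hdD.le)
  have hB : ∀ m, p < m → m < c → avg b p m > avg b m c := by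
    have hs := hstable (d + 1) (by omega) (by omega)
    have hdd : d + 1 - 1 = d := by omega
    rw [hdd] at hs
    exact LS_to b p c hs
  have hmerge := avg_merge b hjp hpc hA hB hx
  have hLS : LocallyStable b (j + 1) c := LS_of b j c hmerge
  have hcn : c ≤ n := by
    have := emono D le_rfl (d + 1) (by omega)
    omega
  have := hmax d hd hdD.le (j + 1) c (by omega) hcn (le_refl _) hpc.le hLS
  omega
end

section
/- Let b: [0,1] → ℝ and σ²: [0,1] → ℝ be continuous with σ²(v) > 0 for all v ∈ [0,1]. Set B(u) = ∫_0^u b(v) dv and b̄ = B(1), and assume B(u) > b̄·u for all u ∈ (0,1). Define Ψ(u) = ∫_{1/2}^u σ²(v)/(2(B(v) − b̄·v)) dv for u ∈ (0,1). Then Ψ is a strictly increasing continuous bijection from (0,1) onto ℝ; in particular Ψ(u) → −∞ as u → 0⁺ and Ψ(u) → +∞ as u → 1⁻. -/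
/-!
The integrand `σ²(v) / (2 (B v - b̄ v))` is continuous and positive on `(0,1)`, so `Ψ` is a
continuous, strictly increasing primitive. The chord gap `B v - b̄ v` vanishes at both endpoints
and is Lipschitz because `b` is bounded, so it is at most `C v` and `C (1 - v)`; as `σ²` is
bounded below by a positive constant, the integrand dominates `c / v` near `0` and `c / (1 - v)`
near `1`. These have logarithmically divergent integrals, so `Ψ` runs from `-∞` to `+∞`, and the
intermediate value theorem makes it onto.
-/

open Set Filter Topology MeasureTheory

section Primitive

variable {f : ℝ → ℝ} {a b x₀ : ℝ}

theorem intervalIntegrable_of_continuousOn_Ioo (hf : ContinuousOn f (Ioo a b)) {x y : ℝ}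
    (hx : x ∈ Ioo a b) (hy : y ∈ Ioo a b) : IntervalIntegrable f volume x y :=
  (hf.mono (ordConnected_Ioo.uIcc_subset hx hy)).intervalIntegrable

theorem continuousOn_integral_of_continuousOn_Ioo (hf : ContinuousOn f (Ioo a b))
    (hx₀ : x₀ ∈ Ioo a b) : ContinuousOn (fun u => ∫ x in x₀..u, f x) (Ioo a b) := fun u hu =>
  (intervalIntegral.integral_hasDerivAt_right (intervalIntegrable_of_continuousOn_Ioo hf hx₀ hu)
    (hf.stronglyMeasurableAtFilter isOpen_Ioo u hu)
    (hf.continuousAt (isOpen_Ioo.mem_nhds hu))).continuousAt.continuousWithinAt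

theorem strictMonoOn_integral_of_pos (hf : ContinuousOn f (Ioo a b)) (hx₀ : x₀ ∈ Ioo a b)
    (hpos : ∀ x ∈ Ioo a b, 0 < f x) : StrictMonoOn (fun u => ∫ x in x₀..u, f x) (Ioo a b) := by
  intro x hx y hy hxy
  have hint : ∀ {x y}, x ∈ Ioo a b → y ∈ Ioo a b → IntervalIntegrable f volume x y :=
    intervalIntegrable_of_continuousOn_Ioo hf
  rw [← sub_pos, intervalIntegral.integral_interval_sub_left (hint hx₀ hy) (hint hx₀ hx)]
  exact intervalIntegral.intervalIntegral_pos_of_pos_on (hint hx hy)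
    (fun v hv => hpos v ⟨hx.1.trans hv.1, hv.2.trans hy.2⟩) hxy

end Primitive

section Divergence

variable {f : ℝ → ℝ} {a b c m : ℝ}

theorem integral_div_sub_eq_mul_log (c : ℝ) {u : ℝ} (hau : a < u) (hub : u ≤ b) :
    ∫ v in u..b, c / (v - a) = c * Real.log ((b - a) / (u - a)) := by
  have h0 : (0 : ℝ) ∉ uIcc (u - a) (b - a) := by
    rw [uIcc_of_le (by linarith)]
    exact fun h => (sub_pos.2 hau).not_ge h.1
  simp only [div_eq_mul_inv c, intervalIntegral.integral_const_mul,
    intervalIntegral.integral_comp_sub_right (fun x => x⁻¹), integral_inv h0]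

theorem tendsto_sub_nhdsGT_zero (a : ℝ) : Tendsto (fun u => u - a) (𝓝[>] a) (𝓝[>] 0) :=
  tendsto_nhdsWithin_iff.2 ⟨tendsto_nhdsWithin_of_tendsto_nhds
    (by simpa using (continuous_sub_right a).tendsto a),
    eventually_nhdsWithin_of_forall fun _ hu => mem_Ioi.2 (sub_pos.2 hu)⟩

theorem tendsto_integral_nhdsGT_atBot (hc : 0 < c) (hf : ContinuousOn f (Ioo a b))
    (hle : ∀ v ∈ Ioo a b, c / (v - a) ≤ f v) (hm : m ∈ Ioo a b) :
    Tendsto (fun u => ∫ v in m..u, f v) (𝓝[>] a) atBot := by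
  have hlower : ∀ u ∈ Ioo a m, c * Real.log ((m - a) / (u - a)) ≤ ∫ v in u..m, f v := by
    intro u hu
    rw [← integral_div_sub_eq_mul_log c hu.1 hu.2.le]
    refine intervalIntegral.integral_mono_on_of_le_Ioo hu.2.le ?_
      (intervalIntegrable_of_continuousOn_Ioo hf ⟨hu.1, hu.2.trans hm.2⟩ hm)
      fun v hv => hle v ⟨hu.1.trans hv.1, hv.2.trans hm.2⟩
    refine ContinuousOn.intervalIntegrable fun v hv => ?_
    rw [uIcc_of_le hu.2.le] at hv
    exact (continuousAt_const.div (continuousAt_id.sub continuousAt_const)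
      (sub_pos.2 (hu.1.trans_le hv.1)).ne').continuousWithinAt
  have hlog : Tendsto (fun u => c * Real.log ((m - a) / (u - a))) (𝓝[>] a) atTop := by
    refine Tendsto.const_mul_atTop hc (Real.tendsto_log_atTop.comp ?_)
    simp only [div_eq_mul_inv (m - a)]
    exact Tendsto.const_mul_atTop (sub_pos.2 hm.1)
      (tendsto_inv_nhdsGT_zero.comp (tendsto_sub_nhdsGT_zero a))
  have hdiv : Tendsto (fun u => ∫ v in u..m, f v) (𝓝[>] a) atTop := by
    refine tendsto_atTop_mono' _ ?_ hlog
    filter_upwards [Ioo_mem_nhdsGT hm.1] using hlower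
  refine (tendsto_neg_atTop_atBot.comp hdiv).congr fun u => ?_
  rw [Function.comp_apply, intervalIntegral.integral_symm, neg_neg]

theorem tendsto_integral_nhdsLT_atTop (hc : 0 < c) (hf : ContinuousOn f (Ioo a b))
    (hle : ∀ v ∈ Ioo a b, c / (b - v) ≤ f v) (hm : m ∈ Ioo a b) :
    Tendsto (fun u => ∫ v in m..u, f v) (𝓝[<] b) atTop := by
  have hneg : MapsTo Neg.neg (Ioo (-b) (-a)) (Ioo a b) := fun _ hv =>
    ⟨lt_neg.2 hv.2, neg_lt.2 hv.1⟩
  have hreflect : Tendsto (fun u => ∫ v in -m..u, f (-v)) (𝓝[>] (-b)) atBot :=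
    tendsto_integral_nhdsGT_atBot hc (hf.comp continuousOn_neg hneg)
      (fun v hv => by simpa [sub_eq_add_neg, add_comm] using hle (-v) (hneg hv))
      (by simpa [neg_lt, And.comm] using hm)
  refine (tendsto_neg_atBot_atTop.comp (hreflect.comp tendsto_neg_nhdsLT)).congr fun u => ?_
  simp [intervalIntegral.integral_comp_neg, intervalIntegral.integral_symm m]

end Divergence

section ChordGap

variable {b B : ℝ → ℝ} {M : ℝ}

theorem abs_primitive_sub_le {p q x y : ℝ} (hB : ∀ u, B u = ∫ v in p..u, b v)
    (hb : IntegrableOn b (Icc p q)) (hM : ∀ v ∈ Icc p q, |b v| ≤ M)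
    (hx : x ∈ Icc p q) (hy : y ∈ Icc p q) : |B x - B y| ≤ M * |x - y| := by
  have hint {z : ℝ} (hz : z ∈ Icc p q) : IntervalIntegrable b volume p z :=
    (hb.mono_set (uIcc_subset_Icc (left_mem_Icc.2 (hz.1.trans hz.2)) hz)).intervalIntegrable
  rw [hB, hB, intervalIntegral.integral_interval_sub_left (hint hx) (hint hy)]
  simpa only [Real.norm_eq_abs] using intervalIntegral.norm_integral_le_of_norm_le_const
    fun v hv => (Real.norm_eq_abs (b v)).trans_le
      (hM v (uIcc_subset_Icc hy hx (uIoc_subset_uIcc hv)))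

theorem continuousOn_Icc_of_eq_primitive {p q : ℝ} (hB : ∀ u, B u = ∫ v in p..u, b v)
    (hb : IntervalIntegrable b volume p q) (hpq : p ≤ q) : ContinuousOn B (Icc p q) := by
  have hprim := intervalIntegral.continuousOn_primitive_interval' hb left_mem_uIcc
  rw [uIcc_of_le hpq] at hprim
  exact hprim.congr fun u _ => hB u

theorem primitive_sub_chord_le {v : ℝ} (hB : ∀ u, B u = ∫ x in (0 : ℝ)..u, b x)
    (hb : IntegrableOn b (Icc 0 1)) (hM : ∀ x ∈ Icc (0 : ℝ) 1, |b x| ≤ M) (hv : v ∈ Icc (0 : ℝ) 1) :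
    B v - B 1 * v ≤ 2 * M * v ∧ B v - B 1 * v ≤ 2 * M * (1 - v) := by
  have h0 : B 0 = 0 := by simp [hB]
  have hIcc0 : (0 : ℝ) ∈ Icc (0 : ℝ) 1 := left_mem_Icc.2 zero_le_one
  have hIcc1 : (1 : ℝ) ∈ Icc (0 : ℝ) 1 := right_mem_Icc.2 zero_le_one
  have hv0 := abs_le.1 (abs_primitive_sub_le hB hb hM hv hIcc0)
  have hv1 := abs_le.1 (abs_primitive_sub_le hB hb hM hv hIcc1)
  have h10 := abs_le.1 (abs_primitive_sub_le hB hb hM hIcc1 hIcc0)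
  rw [h0, sub_zero, sub_zero, abs_of_nonneg hv.1] at hv0
  rw [abs_of_nonpos (sub_nonpos.2 hv.2)] at hv1
  rw [h0, sub_zero, sub_zero, abs_one, mul_one] at h10
  constructor <;> nlinarith [hv.1, hv.2]

end ChordGap

theorem exists_pos_div_le_div {σ2 g : ℝ → ℝ} {K : ℝ} (hσc : ContinuousOn σ2 (Icc 0 1))
    (hσ : ∀ v ∈ Icc (0 : ℝ) 1, 0 < σ2 v) (hg : ∀ v ∈ Ioo (0 : ℝ) 1, 0 < g v)
    (hgK : ∀ v ∈ Ioo (0 : ℝ) 1, g v ≤ K * v ∧ g v ≤ K * (1 - v)) :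
    ∃ c > 0, ∀ v ∈ Ioo (0 : ℝ) 1, c / v ≤ σ2 v / (2 * g v) ∧ c / (1 - v) ≤ σ2 v / (2 * g v) := by
  obtain ⟨v₀, hv₀, hmin⟩ := isCompact_Icc.exists_isMinOn (nonempty_Icc.2 zero_le_one) hσc
  have hhalf : (1 / 2 : ℝ) ∈ Ioo (0 : ℝ) 1 := by norm_num
  have hK : 0 < K := by nlinarith [hg _ hhalf, (hgK _ hhalf).1]
  refine ⟨σ2 v₀ / (2 * K), div_pos (hσ v₀ hv₀) (by positivity), fun v hv => ?_⟩
  have hbound {w : ℝ} (hw : 0 < w) (hgw : g v ≤ K * w) :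
      σ2 v₀ / (2 * K) / w ≤ σ2 v / (2 * g v) := by
    rw [div_div, mul_assoc]
    exact div_le_div₀ (hσ v (Ioo_subset_Icc_self hv)).le (hmin (Ioo_subset_Icc_self hv))
      (mul_pos two_pos (hg v hv)) (by linarith)
  exact ⟨hbound hv.1 (hgK v hv).1, hbound (sub_pos.2 hv.2) (hgK v hv).2⟩

/-- Under the Oleinik entropy condition, the inverse distribution function `Ψ` of the
travelling-wave profile is a strictly increasing continuous bijection from `(0,1)`
onto `ℝ`, diverging to `-∞` at `0⁺` and to `+∞` at `1⁻`. -/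
theorem Psi_bijection (b σ2 : ℝ → ℝ)
    (hbc : ContinuousOn b (Icc 0 1)) (hσc : ContinuousOn σ2 (Icc 0 1))
    (hσ : ∀ v ∈ Icc (0 : ℝ) 1, 0 < σ2 v)
    (B : ℝ → ℝ) (hB : ∀ u, B u = ∫ v in (0 : ℝ)..u, b v)
    (bbar : ℝ) (hbbar : bbar = B 1)
    (hole : ∀ u ∈ Ioo (0 : ℝ) 1, B u > bbar * u)
    (Ψ : ℝ → ℝ)
    (hΨ : ∀ u, Ψ u = ∫ v in (1 / 2 : ℝ)..u, σ2 v / (2 * (B v - bbar * v))) :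
    StrictMonoOn Ψ (Ioo 0 1) ∧ ContinuousOn Ψ (Ioo 0 1) ∧
      BijOn Ψ (Ioo 0 1) univ ∧
      Tendsto Ψ (nhdsWithin 0 (Ioo 0 1)) atBot ∧
      Tendsto Ψ (nhdsWithin 1 (Ioo 0 1)) atTop := by
  subst hbbar
  set F : ℝ → ℝ := fun v => σ2 v / (2 * (B v - B 1 * v))
  obtain rfl : Ψ = fun u => ∫ v in (1 / 2 : ℝ)..u, F v := funext hΨ
  have hhalf : (1 / 2 : ℝ) ∈ Ioo (0 : ℝ) 1 := by norm_num
  have hgap : ∀ v ∈ Ioo (0 : ℝ) 1, 0 < B v - B 1 * v := fun v hv => sub_pos.2 (hole v hv)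
  have hBc := continuousOn_Icc_of_eq_primitive hB (hbc.intervalIntegrable_of_Icc zero_le_one)
    zero_le_one
  have hFc : ContinuousOn F (Ioo 0 1) :=
    (hσc.mono Ioo_subset_Icc_self).div (continuousOn_const.mul
      ((hBc.mono Ioo_subset_Icc_self).sub (continuousOn_const.mul continuousOn_id)))
      fun v hv => (mul_pos two_pos (hgap v hv)).ne'
  have hFpos : ∀ v ∈ Ioo (0 : ℝ) 1, 0 < F v := fun v hv =>
    div_pos (hσ v (Ioo_subset_Icc_self hv)) (mul_pos two_pos (hgap v hv))
  obtain ⟨M, hM⟩ := isCompact_Icc.exists_bound_of_continuousOn hbc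
  obtain ⟨c, hc, hcF⟩ := exists_pos_div_le_div hσc hσ hgap fun v hv =>
    primitive_sub_chord_le hB hbc.integrableOn_Icc hM (Ioo_subset_Icc_self hv)
  have hmono := strictMonoOn_integral_of_pos hFc hhalf hFpos
  have hcont := continuousOn_integral_of_continuousOn_Ioo hFc hhalf
  have hbot := tendsto_integral_nhdsGT_atBot hc hFc (fun v hv => by simpa using (hcF v hv).1) hhalf
  have htop := tendsto_integral_nhdsLT_atTop hc hFc (fun v hv => (hcF v hv).2) hhalf
  rw [nhdsWithin_Ioo_eq_nhdsGT one_pos, nhdsWithin_Ioo_eq_nhdsLT one_pos]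
  refine ⟨hmono, hcont, ⟨mapsTo_univ _ _, hmono.injOn, ?_⟩, hbot, htop⟩
  exact hcont.surjOn_of_tendsto (nonempty_Ioo.2 one_pos)
    ((tendsto_comp_coe_Ioo_atBot one_pos).2 hbot) ((tendsto_comp_coe_Ioo_atTop one_pos).2 htop)
end

section
/- Let b, σ²: [0,1] → ℝ be continuous with σ² > 0, B(u) = ∫_0^u b, b̄ = B(1), and assume B(u) > b̄u on (0,1). Define Ψ(u) = ∫_{1/2}^u σ²(v)/(2(B(v)−b̄v)) dv. If b̄ − b(1) > σ²(1)/2, then ∫_0^1 exp(Ψ(1−v)) dv < ∞. If 0 < b̄ − b(1) < σ²(1)/2, then ∫_0^1 exp(Ψ(1−v)) dv = ∞. -/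
/-!
Since `B(u) - b̄u` vanishes at `u = 1` with left derivative `b(1) - b̄`, the integrand of `Ψ`
behaves like `L / (1 - u)` as `u → 1⁻`, with `L = σ²(1) / (2(b̄ - b(1)))`. For `c` on either side
of `L`, the mean value theorem compares `Ψ(u)` with `c · (-log(1 - u))` near `1`, so
`exp(Ψ(1 - v))` is squeezed between multiples of `v^(-c)` near `v = 0`; it is therefore integrable
when `L < 1` and not when `L > 1`. Away from `v = 0` it is monotone and positive, hence bounded.
-/

open Set MeasureTheory Filter Topology Real

lemma exists_forall_Ioo_of_eventually_nhdsLT {a b : ℝ} (hab : a < b) {p : ℝ → Prop}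
    (h : ∀ᶠ w in 𝓝[<] b, p w) : ∃ s ∈ Ioo a b, ∀ w ∈ Ioo s b, p w := by
  obtain ⟨l, hl, hsub⟩ := mem_nhdsLT_iff_exists_Ioo_subset.1 h
  exact ⟨max l ((a + b) / 2), ⟨lt_max_of_lt_right (by linarith), max_lt hl (by linarith)⟩,
    fun w hw => hsub ⟨(le_max_left _ _).trans_lt hw.1, hw.2⟩⟩

lemma sub_le_mul_log_of_le_div {f Ψ : ℝ → ℝ} {c s u : ℝ}
    (hΨ : ∀ x ∈ Ico s 1, HasDerivAt Ψ (f x) x) (hf : ∀ w ∈ Ioo s 1, f w ≤ c / (1 - w))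
    (hsu : s ≤ u) (hu : u < 1) :
    Ψ u - Ψ s ≤ c * log ((1 - s) / (1 - u)) := by
  have hderiv : ∀ x ∈ Ico s 1,
      HasDerivAt (fun u => Ψ u + c * log (1 - u)) (f x + c * (-1 / (1 - x))) x := fun x hx =>
    (hΨ x hx).add ((((hasDerivAt_id' x).const_sub 1).log (sub_pos.2 hx.2).ne').const_mul c)
  have hanti : AntitoneOn (fun u => Ψ u + c * log (1 - u)) (Ico s 1) := by
    refine antitoneOn_of_hasDerivWithinAt_nonpos (f' := fun x => f x + c * (-1 / (1 - x)))
      (convex_Ico s 1)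
      (fun x hx => (hderiv x hx).continuousAt.continuousWithinAt) (fun x hx => ?_) fun x hx => ?_
    all_goals rw [interior_Ico] at hx
    · exact (hderiv x (Ioo_subset_Ico_self hx)).hasDerivWithinAt
    · have := hf x hx
      rw [mul_div, mul_neg_one, neg_div]
      linarith
  have := hanti ⟨le_rfl, hsu.trans_lt hu⟩ ⟨hsu, hu⟩ hsu
  rw [log_div (by linarith) (by linarith)]
  linarith

lemma mul_log_le_sub_of_div_le {f Ψ : ℝ → ℝ} {c s u : ℝ}
    (hΨ : ∀ x ∈ Ico s 1, HasDerivAt Ψ (f x) x) (hf : ∀ w ∈ Ioo s 1, c / (1 - w) ≤ f w)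
    (hsu : s ≤ u) (hu : u < 1) :
    c * log ((1 - s) / (1 - u)) ≤ Ψ u - Ψ s := by
  have := sub_le_mul_log_of_le_div (f := -f) (Ψ := -Ψ) (c := -c) (fun x hx => (hΨ x hx).neg)
    (fun w hw => by simpa [neg_div] using hf w hw) hsu hu
  simp only [Pi.neg_apply] at this
  linarith

lemma exp_add_mul_log_div (a c : ℝ) {x y : ℝ} (hx : 0 < x) (hy : 0 < y) :
    exp (a + c * log (x / y)) = exp a * x ^ c * y ^ (-c) := by
  rw [exp_add, mul_comm c, ← rpow_def_of_pos (div_pos hx hy), div_rpow hx.le hy.le,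
    rpow_neg hy.le, mul_assoc, div_eq_mul_inv]

lemma integrableOn_Ioo_of_norm_le_rpow {h : ℝ → ℝ} {δ c K : ℝ} (hδ : 0 < δ) (hc : c < 1)
    (hm : AEStronglyMeasurable h (volume.restrict (Ioo 0 δ)))
    (hle : ∀ v ∈ Ioo 0 δ, ‖h v‖ ≤ K * v ^ (-c)) : IntegrableOn h (Ioo 0 δ) :=
  Integrable.mono' (((intervalIntegral.integrableOn_Ioo_rpow_iff hδ).2 (by linarith)).const_mul K)
    hm ((ae_restrict_iff' measurableSet_Ioo).2 (ae_of_all _ hle))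

lemma not_integrableOn_Ioo_of_rpow_le {h : ℝ → ℝ} {δ c K : ℝ} (hδ : 0 < δ) (hc : 1 ≤ c)
    (hK : 0 < K) (hle : ∀ v ∈ Ioo 0 δ, K * v ^ (-c) ≤ h v) : ¬ IntegrableOn h (Ioo 0 δ) := by
  intro hint
  have hrpow : IntegrableOn (fun v => v ^ (-c)) (Ioo 0 δ) := by
    refine Integrable.mono' (hint.const_mul K⁻¹)
      ((continuousOn_id.rpow_const fun v hv => Or.inl hv.1.ne').aestronglyMeasurable
        measurableSet_Ioo) ((ae_restrict_iff' measurableSet_Ioo).2 (ae_of_all _ fun v hv => ?_))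
    rw [norm_of_nonneg (rpow_nonneg hv.1.le _), le_inv_mul_iff₀ hK]
    exact hle v hv
  have := (intervalIntegral.integrableOn_Ioo_rpow_iff hδ).1 hrpow
  linarith

lemma AntitoneOn.integrableOn_Ioo_of_integrableOn_Ioo {h : ℝ → ℝ} {a b δ : ℝ}
    (hanti : AntitoneOn h (Ioo a b)) (hnonneg : ∀ x ∈ Ioo a b, 0 ≤ h x) (hδ : δ ∈ Ioo a b)
    (hint : IntegrableOn h (Ioo a δ)) : IntegrableOn h (Ioo a b) := by
  have hsub : Ico δ b ⊆ Ioo a b := fun x hx => ⟨hδ.1.trans_le hx.1, hx.2⟩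
  have htail : IntegrableOn h (Ico δ b) := by
    refine Integrable.mono' (integrableOn_const measure_Ico_lt_top.ne (C := h δ))
      (aemeasurable_restrict_of_antitoneOn measurableSet_Ico (hanti.mono hsub)).aestronglyMeasurable
      ((ae_restrict_iff' measurableSet_Ico).2 (ae_of_all _ fun x hx => ?_))
    rw [norm_of_nonneg (hnonneg x (hsub hx))]
    exact hanti hδ (hsub hx) hx.1
  exact (hint.union htail).mono_set fun x hx => (lt_or_ge x δ).imp (fun h => ⟨hx.1, h⟩)
    fun h => ⟨h, hx.2⟩

theorem integrableOn_exp_comp_one_sub_of_tendsto {f Ψ : ℝ → ℝ} {L : ℝ}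
    (hΨ : ∀ x ∈ Ioo (0 : ℝ) 1, HasDerivAt Ψ (f x) x) (hf : ∀ x ∈ Ioo (0 : ℝ) 1, 0 ≤ f x)
    (hL : Tendsto (fun w => (1 - w) * f w) (𝓝[<] 1) (𝓝 L)) (hL1 : L < 1) :
    IntegrableOn (fun v => exp (Ψ (1 - v))) (Ioo 0 1) := by
  obtain ⟨c, hLc, hc1⟩ := exists_between hL1
  obtain ⟨s, hs, hsc⟩ :=
    exists_forall_Ioo_of_eventually_nhdsLT zero_lt_one (hL.eventually (gt_mem_nhds hLc))
  have hΨmono : MonotoneOn Ψ (Ioo 0 1) := by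
    refine monotoneOn_of_hasDerivWithinAt_nonneg (f' := f) (convex_Ioo 0 1)
      (fun x hx => (hΨ x hx).continuousAt.continuousWithinAt) (fun x hx => ?_) fun x hx => ?_
    all_goals rw [interior_Ioo] at hx
    exacts [(hΨ x hx).hasDerivWithinAt, hf x hx]
  have hanti : AntitoneOn (fun v => exp (Ψ (1 - v))) (Ioo 0 1) := fun x hx y hy hxy =>
    exp_le_exp.2 (hΨmono ⟨by linarith [hy.2], by linarith [hy.1]⟩
      ⟨by linarith [hx.2], by linarith [hx.1]⟩ (by linarith))
  have hδ : 1 - s ∈ Ioo (0 : ℝ) 1 := ⟨by linarith [hs.2], by linarith [hs.1]⟩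
  refine hanti.integrableOn_Ioo_of_integrableOn_Ioo (fun v _ => (exp_pos _).le) hδ ?_
  refine integrableOn_Ioo_of_norm_le_rpow (K := exp (Ψ s) * (1 - s) ^ c) hδ.1 hc1
    (aemeasurable_restrict_of_antitoneOn measurableSet_Ioo
      (hanti.mono (Ioo_subset_Ioo_right hδ.2.le))).aestronglyMeasurable fun v hv => ?_
  have hlog := sub_le_mul_log_of_le_div (u := 1 - v)
    (fun x hx => hΨ x ⟨hs.1.trans_le hx.1, hx.2⟩)
    (fun w hw => by rw [le_div_iff₀ (sub_pos.2 hw.2), mul_comm]; exact (hsc w hw).le)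
    (by linarith [hv.2]) (by linarith [hv.1])
  rw [norm_of_nonneg (exp_pos _).le, ← exp_add_mul_log_div _ _ (sub_pos.2 hs.2) hv.1]
  exact exp_le_exp.2 (by rw [sub_sub_cancel] at hlog; linarith)

theorem not_integrableOn_exp_comp_one_sub_of_tendsto {f Ψ : ℝ → ℝ} {L : ℝ}
    (hΨ : ∀ x ∈ Ioo (0 : ℝ) 1, HasDerivAt Ψ (f x) x)
    (hL : Tendsto (fun w => (1 - w) * f w) (𝓝[<] 1) (𝓝 L)) (hL1 : 1 < L) :
    ¬ IntegrableOn (fun v => exp (Ψ (1 - v))) (Ioo 0 1) := by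
  obtain ⟨s, hs, hsc⟩ :=
    exists_forall_Ioo_of_eventually_nhdsLT zero_lt_one (hL.eventually (lt_mem_nhds hL1))
  have hδ : 0 < 1 - s := sub_pos.2 hs.2
  refine fun hint => not_integrableOn_Ioo_of_rpow_le (K := exp (Ψ s) * (1 - s) ^ (1 : ℝ)) hδ
    le_rfl (by positivity) (fun v hv => ?_)
    (hint.mono_set (Ioo_subset_Ioo_right (by linarith [hs.1])))
  have hlog := mul_log_le_sub_of_div_le (u := 1 - v)
    (fun x hx => hΨ x ⟨hs.1.trans_le hx.1, hx.2⟩)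
    (fun w hw => by rw [div_le_iff₀ (sub_pos.2 hw.2), mul_comm]; exact (hsc w hw).le)
    (by linarith [hv.2]) (by linarith [hv.1])
  rw [← exp_add_mul_log_div _ _ hδ hv.1]
  exact exp_le_exp.2 (by rw [sub_sub_cancel] at hlog; linarith)

lemma hasDerivAt_integral_of_continuousOn {f : ℝ → ℝ} {s : Set ℝ} (hs : IsOpen s)
    (hs' : OrdConnected s) (hf : ContinuousOn f s) {a x : ℝ} (ha : a ∈ s) (hx : x ∈ s) :
    HasDerivAt (fun u => ∫ t in a..u, f t) (f x) x :=
  intervalIntegral.integral_hasDerivAt_right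
    ((hf.mono (hs'.uIcc_subset ha hx)).intervalIntegrable)
    (hf.stronglyMeasurableAtFilter hs x hx) (hf.continuousAt (hs.mem_nhds hx))

lemma hasDerivWithinAt_integral_Iic_of_continuousOn {f : ℝ → ℝ} {a x : ℝ} (hax : a < x)
    (hf : ContinuousOn f (Icc a x)) :
    HasDerivWithinAt (fun u => ∫ t in a..u, f t) (f x) (Iic x) x := by
  have hnhds : 𝓝[≤] x = 𝓝[Icc a x] x := (nhdsWithin_Icc_eq_nhdsLE hax).symm
  refine intervalIntegral.integral_hasDerivWithinAt_right
    (hf.intervalIntegrable_of_Icc hax.le) ?_ ?_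
  · rw [hnhds]; exact hf.stronglyMeasurableAtFilter_nhdsWithin measurableSet_Icc x
  · exact (hf x ⟨hax.le, le_rfl⟩).mono_of_mem_nhdsWithin (Icc_mem_nhdsLE hax)

lemma tendsto_div_sub_of_hasDerivWithinAt {g : ℝ → ℝ} {x a : ℝ}
    (hg : HasDerivWithinAt g (-a) (Iic x) x) (hgx : g x = 0) :
    Tendsto (fun w => g w / (x - w)) (𝓝[<] x) (𝓝 a) := by
  have hslope := hasDerivWithinAt_iff_tendsto_slope.1 hg
  rw [Iic_sdiff_right] at hslope
  convert hslope.neg using 1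
  · ext w
    rw [slope_def_field, hgx, sub_zero, ← neg_div_neg_eq, neg_sub, neg_div]
  · rw [neg_neg]

lemma tendsto_sub_mul_div_of_hasDerivWithinAt {σ g : ℝ → ℝ} {x a : ℝ}
    (hσ : ContinuousWithinAt σ (Iio x) x) (hg : HasDerivWithinAt g (-a) (Iic x) x)
    (hgx : g x = 0) (ha : a ≠ 0) :
    Tendsto (fun w => (x - w) * (σ w / g w)) (𝓝[<] x) (𝓝 (σ x / a)) := by
  refine (hσ.tendsto.div (tendsto_div_sub_of_hasDerivWithinAt hg hgx) ha).congr' ?_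
  filter_upwards [self_mem_nhdsWithin] with w (hw : w < x)
  have : x - w ≠ 0 := sub_ne_zero.2 hw.ne'
  simp only [Pi.div_apply]
  field_simp

lemma tendsto_one_sub_mul_div_gap {b σ2 B : ℝ → ℝ} {bbar : ℝ} (hbc : ContinuousOn b (Icc 0 1))
    (hσc : ContinuousOn σ2 (Icc 0 1)) (hB : ∀ u, B u = ∫ v in (0 : ℝ)..u, b v)
    (hbbar : bbar = B 1) (ha : bbar - b 1 ≠ 0) :
    Tendsto (fun w => (1 - w) * (σ2 w / (2 * (B w - bbar * w)))) (𝓝[<] 1)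
      (𝓝 (σ2 1 / (2 * (bbar - b 1)))) := by
  have hBderiv : HasDerivWithinAt B (b 1) (Iic 1) 1 := by
    rw [funext hB]
    exact hasDerivWithinAt_integral_Iic_of_continuousOn zero_lt_one hbc
  have hgap_deriv : HasDerivWithinAt (fun w => 2 * (B w - bbar * w)) (-(2 * (bbar - b 1)))
      (Iic 1) 1 :=
    ((hBderiv.sub ((hasDerivWithinAt_id 1 (Iic 1)).const_mul bbar)).const_mul 2).congr_deriv
      (by ring)
  exact tendsto_sub_mul_div_of_hasDerivWithinAt
    ((hσc 1 (right_mem_Icc.2 zero_le_one)).mono_of_mem_nhdsWithin (Icc_mem_nhdsLT zero_lt_one))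
    hgap_deriv (by rw [← hbbar, mul_one, sub_self, mul_zero]) (mul_ne_zero two_ne_zero ha)

/-- The Chatterjee–Pal phase transition: the stationary mean-field capital density
`exp(Ψ(1-v))` is integrable on `(0,1)` in the supercritical case
`b̄ - b(1) > σ²(1)/2`, and non-integrable in the subcritical case
`0 < b̄ - b(1) < σ²(1)/2`. -/
theorem chatterjee_pal_phase_transition (b σ2 : ℝ → ℝ)
    (hbc : ContinuousOn b (Icc 0 1)) (hσc : ContinuousOn σ2 (Icc 0 1))
    (hσ : ∀ v ∈ Icc (0 : ℝ) 1, 0 < σ2 v)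
    (B : ℝ → ℝ) (hB : ∀ u, B u = ∫ v in (0 : ℝ)..u, b v)
    (bbar : ℝ) (hbbar : bbar = B 1)
    (hole : ∀ u ∈ Ioo (0 : ℝ) 1, B u > bbar * u)
    (Ψ : ℝ → ℝ)
    (hΨ : ∀ u, Ψ u = ∫ v in (1 / 2 : ℝ)..u, σ2 v / (2 * (B v - bbar * v))) :
    (σ2 1 / 2 < bbar - b 1 →
        IntegrableOn (fun v => Real.exp (Ψ (1 - v))) (Ioo 0 1) volume) ∧
    (0 < bbar - b 1 → bbar - b 1 < σ2 1 / 2 →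
        ¬ IntegrableOn (fun v => Real.exp (Ψ (1 - v))) (Ioo 0 1) volume) := by
  have hgap : ∀ v ∈ Ioo (0 : ℝ) 1, 0 < 2 * (B v - bbar * v) :=
    fun v hv => mul_pos two_pos (sub_pos.2 (hole v hv))
  have hBc : ContinuousOn B (Ioo 0 1) := by
    rw [funext hB]
    exact (intervalIntegral.continuousOn_primitive_interval'
      (hbc.intervalIntegrable_of_Icc zero_le_one) left_mem_uIcc).mono
      (Ioo_subset_Icc_self.trans Icc_subset_uIcc)
  have hΨderiv : ∀ x ∈ Ioo (0 : ℝ) 1, HasDerivAt Ψ (σ2 x / (2 * (B x - bbar * x))) x :=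
    fun x hx => by
      rw [funext hΨ]
      refine hasDerivAt_integral_of_continuousOn isOpen_Ioo ordConnected_Ioo ?_ (by norm_num) hx
      exact (hσc.mono Ioo_subset_Icc_self).div (continuousOn_const.mul
        (hBc.sub (continuousOn_const.mul continuousOn_id))) fun v hv => (hgap v hv).ne'
  have hσ1 : 0 < σ2 1 := hσ 1 (right_mem_Icc.2 zero_le_one)
  refine ⟨fun hsup => ?_, fun ha hsub => ?_⟩
  · exact integrableOn_exp_comp_one_sub_of_tendsto hΨderiv
      (fun v hv => div_nonneg (hσ v (Ioo_subset_Icc_self hv)).le (hgap v hv).le)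
      (tendsto_one_sub_mul_div_gap hbc hσc hB hbbar (by linarith))
      ((div_lt_one (by linarith)).2 (by linarith))
  · exact not_integrableOn_exp_comp_one_sub_of_tendsto hΨderiv
      (tendsto_one_sub_mul_div_gap hbc hσc hB hbbar ha.ne')
      ((one_lt_div (by linarith)).2 (by linarith))
end

section
/- Let b, σ²: [0,1] → ℝ be continuous with σ² > 0, B(u) = ∫_0^u b, b̄ = B(1), B(u) > b̄u on (0,1), and b̄ − b(1) > σ²(1)/2. Define Ψ(u) = ∫_{1/2}^u σ²(v)/(2(B(v)−b̄v)) dv and the stationary capital density π_st(v) = exp(Ψ(1−v)) / ∫_0^1 exp(Ψ(1−w)) dw on (0,1). Then lim_{v→0⁺} log(π_st(v)) / log(v) = −σ²(1)/(2(b̄ − b(1))). -/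
/-!
Write `Ψ' u = σ²(u) / (2 (B u - b̄ u))` (`psiDeriv`), so that
`Ψ (1 - v) = ∫_v^{1/2} Ψ' (1 - t) dt`. Since `B 1 = b̄` and `B' (1⁻) = b(1)`, the denominator
vanishes linearly at `1` and `t Ψ' (1 - t) → c := σ²(1) / (2 (b̄ - b(1)))`. An integrand
asymptotic to `c / t` at `0⁺` has integral `-c log v + o(log v)` over `[v, 1/2]`, hence
`Ψ (1 - v) / log v → -c`.

The normaliser `Z` only shifts `log π_st` by the constant `log Z`, negligible against `log v`,
once `Z` is known to be positive (a non-integrable normaliser would have the junk value `0`).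
Supercriticality says `c < 1`, so near `0` the integrand `exp Ψ (1 - v)` is at most `v ^ (-r)`
for some `r < 1`, and on `[1/2, 1)` it is at most `1` because `Ψ' ≥ 0`.
-/

open Set Filter MeasureTheory intervalIntegral Asymptotics Topology

theorem ContinuousOn.continuousOn_integral_Ioo {f : ℝ → ℝ} {p q a : ℝ}
    (hf : ContinuousOn f (Ioo p q)) (ha : a ∈ Ioo p q) :
    ContinuousOn (fun u => ∫ t in a..u, f t) (Ioo p q) := fun x hx =>
  (integral_hasDerivAt_right (hf.mono (ordConnected_Ioo.uIcc_subset ha hx)).intervalIntegrable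
    (hf.stronglyMeasurableAtFilter isOpen_Ioo x hx)
    (hf.continuousAt (isOpen_Ioo.mem_nhds hx))).continuousAt.continuousWithinAt

theorem ContinuousOn.hasDerivWithinAt_integral_Iic {f : ℝ → ℝ} {a x : ℝ}
    (hf : ContinuousOn f (Icc a x)) (hax : a < x) :
    HasDerivWithinAt (fun u => ∫ t in a..u, f t) (f x) (Iic x) x :=
  integral_hasDerivWithinAt_right ((uIcc_of_le hax.le).symm ▸ hf).intervalIntegrable
    ⟨Icc a x, Icc_mem_nhdsLE hax, hf.aestronglyMeasurable measurableSet_Icc⟩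
    ((hf.continuousWithinAt ⟨hax.le, le_rfl⟩).mono_of_mem_nhdsWithin (Icc_mem_nhdsLE hax))

theorem tendsto_sub_nhdsGT_zero_nhdsLT (x : ℝ) :
    Tendsto (fun t => x - t) (𝓝[>] 0) (𝓝[<] x) := by
  refine tendsto_nhdsWithin_of_tendsto_nhds_of_eventually_within _ ?_ ?_
  · simpa using ((continuous_sub_left x).tendsto 0).mono_left nhdsWithin_le_nhds
  · filter_upwards [self_mem_nhdsWithin] with t (ht : 0 < t)
    simpa using ht

theorem HasDerivWithinAt.tendsto_div_of_Iic {g : ℝ → ℝ} {g' x : ℝ}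
    (hg : HasDerivWithinAt g g' (Iic x) x) (hgx : g x = 0) :
    Tendsto (fun t => g (x - t) / t) (𝓝[>] 0) (𝓝 (-g')) := by
  have hslope := (hasDerivWithinAt_iff_tendsto_slope' self_notMem_Iio).1 hg.Iio_of_Iic
  refine ((hslope.comp (tendsto_sub_nhdsGT_zero_nhdsLT x)).neg).congr' ?_
  filter_upwards [self_mem_nhdsWithin] with t (ht : 0 < t)
  simp [slope_def_field, hgx, ← div_neg]

theorem HasDerivWithinAt.tendsto_mul_div_of_Iic {σ g : ℝ → ℝ} {s κ x : ℝ}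
    (hg : HasDerivWithinAt g (-κ) (Iic x) x) (hgx : g x = 0) (hκ : κ ≠ 0)
    (hσ : Tendsto σ (𝓝[<] x) (𝓝 s)) :
    Tendsto (fun t => t * (σ (x - t) / g (x - t))) (𝓝[>] 0) (𝓝 (s / κ)) := by
  have h := (hσ.comp (tendsto_sub_nhdsGT_zero_nhdsLT x)).div (hg.tendsto_div_of_Iic hgx)
    (by rwa [neg_neg])
  rw [neg_neg] at h
  refine h.congr fun t => ?_
  show σ (x - t) / (g (x - t) / t) = _
  rw [div_div_eq_mul_div]
  ring

theorem norm_integral_le_mul_log_div {f : ℝ → ℝ} {ε v d : ℝ} (hv : 0 < v) (hvd : v ≤ d)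
    (hf : ∀ t ∈ Ioc v d, ‖t * f t‖ ≤ ε) :
    ‖∫ t in v..d, f t‖ ≤ ε * Real.log (d / v) := by
  have hd : 0 < d := hv.trans_le hvd
  have hbound : ∀ t ∈ Ioc v d, ‖f t‖ ≤ ε * t⁻¹ := fun t ht => by
    have ht0 : 0 < t := hv.trans ht.1
    have := hf t ht
    rw [norm_mul, Real.norm_of_nonneg ht0.le] at this
    rwa [le_mul_inv_iff₀ ht0, mul_comm]
  have hinv : IntervalIntegrable (fun t => ε * t⁻¹) volume v d :=
    (intervalIntegral.intervalIntegrable_inv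
      (fun t ht => (hv.trans_le (uIcc_of_le hvd ▸ ht).1).ne') continuousOn_id).const_mul ε
  calc ‖∫ t in v..d, f t‖ ≤ ∫ t in v..d, ε * t⁻¹ :=
        norm_integral_le_of_norm_le hvd (.of_forall hbound) hinv
    _ = ε * Real.log (d / v) := by
      rw [intervalIntegral.integral_const_mul, integral_inv_of_pos hv hd]

theorem isLittleO_integral_log_of_tendsto_mul {f : ℝ → ℝ} {a : ℝ} (ha : 0 < a)
    (hf : ContinuousOn f (Ioc 0 a)) (hf0 : Tendsto (fun t => t * f t) (𝓝[>] 0) (𝓝 0)) :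
    (fun v => ∫ t in v..a, f t) =o[𝓝[>] 0] Real.log := by
  refine isLittleO_iff.2 fun ε hε => ?_
  obtain ⟨d', hd', hsmall⟩ := mem_nhdsGT_iff_exists_Ioc_subset.1
    (hf0.norm.eventually (eventually_le_nhds (show ‖(0 : ℝ)‖ < ε / 2 by simpa using hε)))
  set d := min d' (min a 1)
  have hd0 : 0 < d := lt_min hd' (lt_min ha one_pos)
  have hda : d ≤ a := (min_le_right _ _).trans (min_le_left _ _)
  have hd1 : d ≤ 1 := (min_le_right _ _).trans (min_le_right _ _)
  have hconst : (fun _ => ∫ t in d..a, f t) =o[𝓝[>] 0] Real.log :=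
    isLittleO_const_left.2 (.inr (tendsto_abs_atBot_atTop.comp Real.tendsto_log_nhdsGT_zero))
  filter_upwards [isLittleO_iff.1 hconst (half_pos hε), Ioo_mem_nhdsGT hd0] with v hv hvd
  have hint : ∀ x y, x ∈ Ioc 0 a → y ∈ Ioc 0 a → IntervalIntegrable f volume x y :=
    fun x y hx hy => (hf.mono (ordConnected_Ioc.uIcc_subset hx hy)).intervalIntegrable
  have hlogv : Real.log v < 0 := Real.log_neg hvd.1 (hvd.2.trans_le hd1)
  calc ‖∫ t in v..a, f t‖ = ‖(∫ t in v..d, f t) + ∫ t in d..a, f t‖ := by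
        rw [integral_add_adjacent_intervals
          (hint _ _ ⟨hvd.1, (hvd.2.trans_le hda).le⟩ ⟨hd0, hda⟩)
          (hint _ _ ⟨hd0, hda⟩ ⟨ha, le_rfl⟩)]
    _ ≤ ‖∫ t in v..d, f t‖ + ‖∫ t in d..a, f t‖ := norm_add_le _ _
    _ ≤ ε / 2 * Real.log (d / v) + ε / 2 * ‖Real.log v‖ :=
        add_le_add (norm_integral_le_mul_log_div hvd.1 hvd.2.le
          fun t ht => hsmall ⟨hvd.1.trans ht.1, ht.2.trans (min_le_left _ _)⟩) hv
    _ ≤ ε * ‖Real.log v‖ := by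
        rw [Real.log_div hd0.ne' hvd.1.ne', Real.norm_of_nonpos hlogv.le]
        have : Real.log d ≤ 0 := Real.log_nonpos hd0.le hd1
        nlinarith

theorem tendsto_integral_div_log_of_tendsto_mul {f : ℝ → ℝ} {a c : ℝ} (ha : 0 < a)
    (hf : ContinuousOn f (Ioc 0 a)) (hfc : Tendsto (fun t => t * f t) (𝓝[>] 0) (𝓝 c)) :
    Tendsto (fun v => (∫ t in v..a, f t) / Real.log v) (𝓝[>] 0) (𝓝 (-c)) := by
  have hinv : ContinuousOn (fun t : ℝ => c * t⁻¹) (Ioc 0 a) :=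
    continuousOn_const.mul (continuousOn_inv₀.mono fun t ht => ht.1.ne')
  have hrem : (fun v => ∫ t in v..a, (f t - c * t⁻¹)) =o[𝓝[>] 0] Real.log := by
    refine isLittleO_integral_log_of_tendsto_mul ha (hf.sub hinv) ?_
    have h0 : Tendsto (fun t => t * f t - c) (𝓝[>] 0) (𝓝 0) := by
      simpa using hfc.sub_const c
    refine h0.congr' ?_
    filter_upwards [self_mem_nhdsWithin] with t (ht : 0 < t)
    field_simp
  have hlim := hrem.tendsto_div_nhds_zero.add
    ((Real.tendsto_log_nhdsGT_zero.inv_tendsto_atBot.const_mul (c * Real.log a)).sub_const c)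
  rw [mul_zero, zero_add, zero_sub] at hlim
  refine hlim.congr' ?_
  filter_upwards [Ioo_mem_nhdsGT (lt_min ha one_pos)] with v ⟨hv0, hv⟩
  have hsub : uIcc v a ⊆ Ioc 0 a :=
    ordConnected_Ioc.uIcc_subset ⟨hv0, (hv.trans_le (min_le_left _ _)).le⟩ ⟨ha, le_rfl⟩
  have hsplit :
      ∫ t in v..a, f t = (∫ t in v..a, (f t - c * t⁻¹)) + c * Real.log (a / v) := by
    rw [integral_sub ((hf.mono hsub).intervalIntegrable)
      (hinv.mono hsub).intervalIntegrable, intervalIntegral.integral_const_mul,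
      integral_inv_of_pos hv0 ha, sub_add_cancel]
  have hlogv : Real.log v ≠ 0 := (Real.log_neg hv0 (hv.trans_le (min_le_right _ _))).ne
  rw [hsplit, Real.log_div ha.ne' hv0.ne', Pi.inv_apply]
  generalize (∫ t in v..a, (f t - c * t⁻¹)) = I
  field_simp

theorem eventually_exp_le_rpow_of_tendsto_div_log {u : ℝ → ℝ} {c r : ℝ}
    (hu : Tendsto (fun v => u v / Real.log v) (𝓝[>] 0) (𝓝 (-c))) (hcr : c < r) :
    ∀ᶠ v in 𝓝[>] 0, Real.exp (u v) ≤ v ^ (-r) := by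
  filter_upwards [hu.eventually (lt_mem_nhds (neg_lt_neg hcr)), Ioo_mem_nhdsGT one_pos]
    with v hv ⟨hv0, hv1⟩
  rw [lt_div_iff_of_neg (Real.log_neg hv0 hv1)] at hv
  rw [Real.rpow_def_of_pos hv0, mul_comm]
  exact Real.exp_le_exp.2 hv.le

theorem integrableOn_Ioc_of_eventually_le_rpow {φ : ℝ → ℝ} {a r : ℝ} (hr : r < 1)
    (hφ : ContinuousOn φ (Ioc 0 a)) (hle : ∀ᶠ v in 𝓝[>] 0, ‖φ v‖ ≤ v ^ (-r)) :
    IntegrableOn φ (Ioc 0 a) := by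
  obtain ⟨δ, hδ, hsub⟩ := mem_nhdsGT_iff_exists_Ioo_subset.1 hle
  have hnear : IntegrableOn φ (Ioc 0 a ∩ Ioo 0 δ) :=
    have hmeas := measurableSet_Ioc.inter measurableSet_Ioo
    Integrable.mono'
      (((integrableOn_Ioo_rpow_iff hδ).2 (by linarith)).mono_set inter_subset_right)
      ((hφ.mono inter_subset_left).aestronglyMeasurable hmeas)
      (ae_restrict_of_forall_mem hmeas fun v hv => hsub hv.2)
  have hfar : IntegrableOn φ (Icc δ a) :=
    (hφ.mono fun v hv => ⟨hδ.trans_le hv.1, hv.2⟩).integrableOn_Icc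
  refine (hnear.union hfar).mono_set fun v hv => ?_
  rcases lt_or_ge v δ with h | h
  exacts [.inl ⟨hv, hv.1, h⟩, .inr ⟨h, hv.2⟩]

theorem integrableOn_exp_integral_of_tendsto_div_log {φ : ℝ → ℝ} {a c : ℝ}
    (ha : a ∈ Ioo 0 1) (hc : c < 1)
    (hφ : ContinuousOn φ (Ioo 0 1)) (hφ0 : ∀ t ∈ Ioo 0 1, 0 ≤ φ t)
    (hlim : Tendsto (fun v => (∫ t in v..a, φ t) / Real.log v) (𝓝[>] 0) (𝓝 (-c))) :
    IntegrableOn (fun v => Real.exp (∫ t in v..a, φ t)) (Ioo 0 1) := by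
  have hcont : ContinuousOn (fun v => Real.exp (∫ t in v..a, φ t)) (Ioo 0 1) := by
    simp only [integral_symm a]
    exact ((hφ.continuousOn_integral_Ioo ha).neg).rexp
  have hnear : IntegrableOn (fun v => Real.exp (∫ t in v..a, φ t)) (Ioc 0 a) := by
    refine integrableOn_Ioc_of_eventually_le_rpow (r := (1 + c) / 2) (by linarith)
      (hcont.mono (Ioc_subset_Ioo_right ha.2)) ?_
    simpa using eventually_exp_le_rpow_of_tendsto_div_log hlim (by linarith)
  have hfar : IntegrableOn (fun v => Real.exp (∫ t in v..a, φ t)) (Ioo a 1) := by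
    refine IntegrableOn.of_bound measure_Ioo_lt_top
      ((hcont.mono (Ioo_subset_Ioo_left ha.1.le)).aestronglyMeasurable measurableSet_Ioo) 1
      (ae_restrict_of_forall_mem measurableSet_Ioo fun v hv => ?_)
    rw [Real.norm_of_nonneg (Real.exp_pos _).le, Real.exp_le_one_iff, integral_symm,
      neg_nonpos]
    exact integral_nonneg hv.1.le fun t ht => hφ0 t ⟨ha.1.trans_le ht.1, ht.2.trans_lt hv.2⟩
  rw [← Ioc_union_Ioo_eq_Ioo ha.1.le ha.2]
  exact hnear.union hfar

theorem tendsto_log_exp_div_div_log {u : ℝ → ℝ} {L Z : ℝ} (hZ : Z ≠ 0)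
    (hu : Tendsto (fun v => u v / Real.log v) (𝓝[>] 0) (𝓝 L)) :
    Tendsto (fun v => Real.log (Real.exp (u v) / Z) / Real.log v) (𝓝[>] 0) (𝓝 L) := by
  have h := hu.sub (Real.tendsto_log_nhdsGT_zero.inv_tendsto_atBot.const_mul (Real.log Z))
  rw [mul_zero, sub_zero] at h
  refine h.congr fun v => ?_
  rw [Real.log_div (Real.exp_pos _).ne' hZ, Real.log_exp, Pi.inv_apply]
  ring

noncomputable def psiDeriv (σ2 B : ℝ → ℝ) (bbar u : ℝ) : ℝ :=
  σ2 u / (2 * (B u - bbar * u))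

section psiDeriv

variable {b σ2 B : ℝ → ℝ} {bbar : ℝ}

theorem continuousOn_psiDeriv (hbc : ContinuousOn b (Icc 0 1))
    (hσc : ContinuousOn σ2 (Icc 0 1))
    (hB : ∀ u, B u = ∫ v in (0 : ℝ)..u, b v)
    (hole : ∀ u ∈ Ioo (0 : ℝ) 1, B u > bbar * u) :
    ContinuousOn (psiDeriv σ2 B bbar) (Ioo 0 1) := by
  have hBc : ContinuousOn B (Icc 0 1) := by
    simpa [funext hB, uIcc_of_le zero_le_one] using
      continuousOn_primitive_interval (μ := volume) (a := 0) (b := 1)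
        (by rw [uIcc_of_le zero_le_one]; exact hbc.integrableOn_Icc)
  exact (hσc.mono Ioo_subset_Icc_self).div (continuousOn_const.mul
    ((hBc.mono Ioo_subset_Icc_self).sub (continuousOn_const.mul continuousOn_id)))
    fun u hu => by linarith [hole u hu]

theorem tendsto_mul_psiDeriv_one_sub (hbc : ContinuousOn b (Icc 0 1))
    (hσc : ContinuousOn σ2 (Icc 0 1)) (hB : ∀ u, B u = ∫ v in (0 : ℝ)..u, b v)
    (hbbar : bbar = B 1) (hb1 : b 1 ≠ bbar) :
    Tendsto (fun t => t * psiDeriv σ2 B bbar (1 - t)) (𝓝[>] 0)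
      (𝓝 (σ2 1 / (2 * (bbar - b 1)))) := by
  have hB1 : HasDerivWithinAt B (b 1) (Iic 1) 1 :=
    funext hB ▸ hbc.hasDerivWithinAt_integral_Iic one_pos
  have hgap :
      HasDerivWithinAt (fun u => 2 * (B u - bbar * u)) (-(2 * (bbar - b 1))) (Iic 1) 1 :=
    ((hB1.sub ((hasDerivWithinAt_id 1 _).const_mul bbar)).const_mul 2).congr_deriv (by ring)
  exact hgap.tendsto_mul_div_of_Iic (by simp [hbbar])
    (mul_ne_zero two_ne_zero (sub_ne_zero.2 hb1.symm))
    ((hσc.continuousWithinAt ⟨zero_le_one, le_rfl⟩).mono_of_mem_nhdsWithin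
      (Icc_mem_nhdsLT one_pos)).tendsto

end psiDeriv

/-- In the supercritical regime, the stationary capital density `π_st` has a power-law
behaviour at `0⁺` with exponent `-σ²(1)/(2(b̄ - b(1)))` in log-log coordinates. -/
theorem stationary_capital_density_power_law (b σ2 : ℝ → ℝ)
    (hbc : ContinuousOn b (Icc 0 1)) (hσc : ContinuousOn σ2 (Icc 0 1))
    (hσ : ∀ v ∈ Icc (0 : ℝ) 1, 0 < σ2 v)
    (B : ℝ → ℝ) (hB : ∀ u, B u = ∫ v in (0 : ℝ)..u, b v)
    (bbar : ℝ) (hbbar : bbar = B 1)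
    (hole : ∀ u ∈ Ioo (0 : ℝ) 1, B u > bbar * u)
    (hsuper : σ2 1 / 2 < bbar - b 1)
    (Ψ : ℝ → ℝ)
    (hΨ : ∀ u, Ψ u = ∫ v in (1 / 2 : ℝ)..u, σ2 v / (2 * (B v - bbar * v)))
    (πst : ℝ → ℝ)
    (hπ : ∀ v, πst v =
      Real.exp (Ψ (1 - v)) / ∫ w in Ioo (0 : ℝ) 1, Real.exp (Ψ (1 - w))) :
    Tendsto (fun v => Real.log (πst v) / Real.log v) (nhdsWithin 0 (Ioi 0))
      (nhds (-(σ2 1 / (2 * (bbar - b 1))))) := by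
  have hκ : 0 < bbar - b 1 := by linarith [hσ 1 ⟨zero_le_one, le_rfl⟩]
  have hmaps : MapsTo (fun t => 1 - t) (Ioo (0 : ℝ) 1) (Ioo 0 1) := fun t ht =>
    ⟨by linarith [ht.2], by linarith [ht.1]⟩
  have hφ : ContinuousOn (fun t => psiDeriv σ2 B bbar (1 - t)) (Ioo 0 1) :=
    (continuousOn_psiDeriv hbc hσc hB hole).comp (continuous_sub_left 1).continuousOn hmaps
  have hΨlog := tendsto_integral_div_log_of_tendsto_mul one_half_pos
    (hφ.mono (Ioc_subset_Ioo_right one_half_lt_one))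
    (tendsto_mul_psiDeriv_one_sub hbc hσc hB hbbar (by linarith))
  have hΨ' : ∀ v, Ψ (1 - v) = ∫ t in v..1 / 2, psiDeriv σ2 B bbar (1 - t) := fun v => by
    rw [hΨ, integral_comp_sub_left (psiDeriv σ2 B bbar)]
    norm_num [psiDeriv]
  have hZ :
      0 < ∫ w in Ioo (0 : ℝ) 1, Real.exp (∫ t in w..1 / 2, psiDeriv σ2 B bbar (1 - t)) :=
    have : NeZero (volume.restrict (Ioo (0 : ℝ) 1)) := ⟨by simp⟩
    integral_exp_pos (integrableOn_exp_integral_of_tendsto_div_log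
      ⟨one_half_pos, one_half_lt_one⟩
      ((div_lt_one (by positivity)).2 (by linarith)) hφ
      (fun t ht => div_nonneg (hσ _ (Ioo_subset_Icc_self (hmaps ht))).le
        (by linarith [hole _ (hmaps ht)])) hΨlog)
  simp only [hπ, hΨ']
  exact tendsto_log_exp_div_div_log hZ.ne' hΨlog
end
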